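/- Let X, X̃ ∈ ℝ^{L×n}, let G ∈ ℝ^{L×K} have columns consisting of orthonormal eigenvectors of XXᵀ corresponding to its K largest eigenvalues λ_1 ≥ … ≥ λ_K, and similarly let G̃ ∈ ℝ^{L×K} consist of top-K orthonormal eigenvectors of X̃X̃ᵀ. If λ_K > λ_{K+1} (where λ_j are the eigenvalues of XXᵀ in decreasing order), then ‖GGᵀ − G̃G̃ᵀ‖_F ≤ (2/(λ_K − λ_{K+1})) · ‖XXᵀ − X̃X̃ᵀ‖_F. -/

import Mathlib

/-!
Davis–Kahan by a trace argument. Write `A = U Λ Uᵀ`, `P` for the projection onto the top `K`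
eigenvectors and `Q` for any orthogonal projection of rank `K`. In the eigenbasis of `A`, `Q`
becomes a projection `R` with `0 ≤ Rᵢᵢ ≤ 1` and `∑ Rᵢᵢ = K`, so

  tr (A (P - Q)) = ∑_{i ≤ K} λᵢ (1 - Rᵢᵢ) - ∑_{i > K} λᵢ Rᵢᵢ ≥ (λ_K - λ_{K+1}) ‖P - Q‖² / 2,

since both sums of weights equal `‖P - Q‖² / 2 = K - tr (P Q)`. The same inequality for `Ã`,
with the roles of `P` and `Q` swapped, gives `tr (Ã (Q - P)) ≥ 0`. Adding the two and applying
Cauchy–Schwarz, `(λ_K - λ_{K+1}) ‖P - Q‖² / 2 ≤ tr ((A - Ã) (P - Q)) ≤ ‖A - Ã‖ ‖P - Q‖`.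
-/

open Matrix

noncomputable def frobNorm {p q : Type*} [Fintype p] [Fintype q]
    (A : Matrix p q ℝ) : ℝ :=
  Real.sqrt (∑ i, ∑ j, (A i j) ^ 2)

variable {m n k : Type*} [Fintype m] [Fintype n]

lemma frobNorm_nonneg (A : Matrix m n ℝ) : 0 ≤ frobNorm A :=
  Real.sqrt_nonneg _

lemma trace_mul_transpose_self (A : Matrix m n ℝ) :
    trace (A * Aᵀ) = ∑ i, ∑ j, A i j ^ 2 := by
  simp [trace, mul_apply, sq]

lemma frobNorm_eq_sqrt_trace (A : Matrix m n ℝ) : frobNorm A = √(trace (A * Aᵀ)) := by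
  rw [frobNorm, trace_mul_transpose_self]

lemma frobNorm_sq (A : Matrix m n ℝ) : frobNorm A ^ 2 = trace (A * Aᵀ) := by
  rw [frobNorm, Real.sq_sqrt (by positivity), trace_mul_transpose_self]

lemma trace_mul_transpose_le_frobNorm_mul (A B : Matrix m n ℝ) :
    trace (A * Bᵀ) ≤ frobNorm A * frobNorm B := by
  simpa [frobNorm, trace, mul_apply, Fintype.sum_prod_type] using
    Real.sum_mul_le_sqrt_mul_sqrt Finset.univ (fun p : m × n ↦ A p.1 p.2) (fun p ↦ B p.1 p.2)

lemma Matrix.isStarProjection_iff_transpose {P : Matrix n n ℝ} :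
    IsStarProjection P ↔ P * P = P ∧ Pᵀ = P := by
  simp [isStarProjection_iff', star_eq_conjTranspose, conjTranspose_eq_transpose_of_trivial]

lemma trace_mul_mul_transpose [DecidableEq n] {U : Matrix m n ℝ} (hU : Uᵀ * U = 1)
    (M : Matrix n n ℝ) :
    trace (U * M * Uᵀ) = trace M := by
  rw [trace_mul_comm, ← Matrix.mul_assoc, hU, Matrix.one_mul]

lemma frobNorm_mul_mul_transpose [DecidableEq n] {U : Matrix m n ℝ} (hU : Uᵀ * U = 1)
    (M : Matrix n n ℝ) :
    frobNorm (U * M * Uᵀ) = frobNorm M := by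
  have h : U * M * Uᵀ * (U * M * Uᵀ)ᵀ = U * (M * Mᵀ) * Uᵀ := by
    simp only [transpose_mul, transpose_transpose, Matrix.mul_assoc]
    rw [← Matrix.mul_assoc Uᵀ U, hU, Matrix.one_mul]
  rw [frobNorm_eq_sqrt_trace, frobNorm_eq_sqrt_trace, h, trace_mul_mul_transpose hU]

namespace IsStarProjection

variable {P Q : Matrix n n ℝ}

lemma isSymm (hP : IsStarProjection P) : P.IsSymm :=
  (isStarProjection_iff_transpose.1 hP).2

lemma mul_mul_transpose [DecidableEq n] {U : Matrix m n ℝ} (hU : Uᵀ * U = 1)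
    (hP : IsStarProjection P) :
    IsStarProjection (U * P * Uᵀ) := by
  obtain ⟨hPP, hPt⟩ := isStarProjection_iff_transpose.1 hP
  refine isStarProjection_iff_transpose.2 ⟨?_, ?_⟩
  · calc U * P * Uᵀ * (U * P * Uᵀ) = U * P * (Uᵀ * U) * P * Uᵀ := by
          simp only [Matrix.mul_assoc]
      _ = U * P * Uᵀ := by rw [hU, Matrix.mul_one, Matrix.mul_assoc U P P, hPP]
  · rw [transpose_mul, transpose_mul, transpose_transpose, hPt, Matrix.mul_assoc]

lemma diag_mem_Icc (hP : IsStarProjection P) (i : n) : P i i ∈ Set.Icc 0 1 := by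
  obtain ⟨hPP, hPt⟩ := isStarProjection_iff_transpose.1 hP
  have hsum : P i i = ∑ j, P i j ^ 2 := by
    conv_lhs => rw [← hPP]
    simp only [mul_apply, sq]
    refine Finset.sum_congr rfl fun j _ ↦ ?_
    rw [← hPt, transpose_apply, hPt]
  have hsq : P i i ^ 2 ≤ P i i :=
    hsum ▸ Finset.single_le_sum (fun j _ ↦ sq_nonneg (P i j)) (Finset.mem_univ i)
  have h0 : 0 ≤ P i i := hsum ▸ Finset.sum_nonneg fun j _ ↦ sq_nonneg (P i j)
  exact ⟨h0, by nlinarith⟩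

lemma frobNorm_sub_sq (hP : IsStarProjection P) (hQ : IsStarProjection Q) :
    frobNorm (P - Q) ^ 2 = trace P + trace Q - 2 * trace (P * Q) := by
  obtain ⟨hPP, hPt⟩ := isStarProjection_iff_transpose.1 hP
  obtain ⟨hQQ, hQt⟩ := isStarProjection_iff_transpose.1 hQ
  rw [frobNorm_sq, transpose_sub, hPt, hQt, sub_mul, mul_sub, mul_sub, hPP, hQQ,
    trace_sub, trace_sub, trace_sub, trace_mul_comm Q P]
  ring

end IsStarProjection

lemma isStarProjection_diagonal_indicator [DecidableEq n] (s : Set n) :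
    IsStarProjection (diagonal (s.indicator 1) : Matrix n n ℝ) := by
  refine isStarProjection_iff_transpose.2 ⟨?_, diagonal_transpose _⟩
  rw [diagonal_mul_diagonal]
  congr 1
  ext i
  by_cases hi : i ∈ s <;> simp [hi]

lemma gap_mul_frobNorm_sq_le_trace_diagonal [DecidableEq n] {lam : n → ℝ} {s : Set n}
    {a b : ℝ} (ha : ∀ i ∈ s, a ≤ lam i) (hb : ∀ i ∉ s, lam i ≤ b)
    {R : Matrix n n ℝ} (hR : IsStarProjection R)
    (htr : trace R = trace (diagonal (s.indicator 1))) :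
    (a - b) / 2 * frobNorm (diagonal (s.indicator 1) - R) ^ 2 ≤
      trace (diagonal lam * (diagonal (s.indicator 1) - R)) := by
  set d : n → ℝ := s.indicator 1
  have hterm : ∀ i,
      a * (d i * (1 - R i i)) - b * ((1 - d i) * R i i) ≤ lam i * (d i - R i i) := by
    intro i
    obtain ⟨h0, h1⟩ := hR.diag_mem_Icc i
    by_cases hi : i ∈ s
    · simp only [d, Set.indicator_of_mem hi, Pi.one_apply]
      nlinarith [ha i hi]
    · simp only [d, Set.indicator_of_notMem hi]
      nlinarith [hb i hi]
  have hbalance : ∑ i, (1 - d i) * R i i = ∑ i, d i * (1 - R i i) := by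
    have : ∑ i, R i i = ∑ i, d i := by simpa [trace] using htr
    simp only [sub_mul, mul_sub, one_mul, mul_one, Finset.sum_sub_distrib, this]
  have hfrob : frobNorm (diagonal d - R) ^ 2 = 2 * ∑ i, d i * (1 - R i i) := by
    rw [(isStarProjection_diagonal_indicator s).frobNorm_sub_sq hR, htr]
    simp only [trace, diag_apply, diagonal_mul, diagonal_apply_eq, mul_sub, mul_one,
      Finset.sum_sub_distrib]
    ring
  calc (a - b) / 2 * frobNorm (diagonal d - R) ^ 2
      = a * ∑ i, d i * (1 - R i i) - b * ∑ i, (1 - d i) * R i i := by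
        rw [hfrob, hbalance]; ring
    _ = ∑ i, (a * (d i * (1 - R i i)) - b * ((1 - d i) * R i i)) := by
        rw [Finset.sum_sub_distrib, Finset.mul_sum, Finset.mul_sum]
    _ ≤ ∑ i, lam i * (d i - R i i) := Finset.sum_le_sum fun i _ ↦ hterm i
    _ = trace (diagonal lam * (diagonal d - R)) := by
        simp [trace, diagonal_mul, mul_sub]

lemma gap_mul_frobNorm_sq_le_trace [DecidableEq n] {U : Matrix n n ℝ} (hU : Uᵀ * U = 1)
    {lam : n → ℝ} {s : Set n} {a b : ℝ} (ha : ∀ i ∈ s, a ≤ lam i) (hb : ∀ i ∉ s, lam i ≤ b)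
    {Q : Matrix n n ℝ} (hQ : IsStarProjection Q)
    (htr : trace Q = trace (diagonal (s.indicator 1))) :
    (a - b) / 2 * frobNorm (U * diagonal (s.indicator 1) * Uᵀ - Q) ^ 2 ≤
      trace (U * diagonal lam * Uᵀ * (U * diagonal (s.indicator 1) * Uᵀ - Q)) := by
  have hUt : Uᵀᵀ * Uᵀ = 1 := by rw [transpose_transpose, mul_eq_one_comm, hU]
  set R := Uᵀ * Q * Uᵀᵀ
  have hQR : Q = U * R * Uᵀ := by
    simp only [R, transpose_transpose, ← Matrix.mul_assoc, mul_eq_one_comm.1 hU,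
      Matrix.one_mul]
    rw [Matrix.mul_assoc, mul_eq_one_comm.1 hU, Matrix.mul_one]
  have hdiff :
      U * diagonal (s.indicator 1) * Uᵀ - Q = U * (diagonal (s.indicator 1) - R) * Uᵀ := by
    rw [hQR, Matrix.mul_sub, Matrix.sub_mul]
  have htrace : U * diagonal lam * Uᵀ * (U * (diagonal (s.indicator 1) - R) * Uᵀ) =
      U * (diagonal lam * (diagonal (s.indicator 1) - R)) * Uᵀ := by
    simp only [Matrix.mul_assoc]
    rw [← Matrix.mul_assoc Uᵀ U, hU, Matrix.one_mul]
  rw [hdiff, htrace, frobNorm_mul_mul_transpose hU, trace_mul_mul_transpose hU]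
  exact gap_mul_frobNorm_sq_le_trace_diagonal ha hb (hQ.mul_mul_transpose hUt)
    (by rw [trace_mul_mul_transpose hUt, htr])

lemma mul_frobNorm_sub_le_of_trace_bounds {A At P Q : Matrix n n ℝ} (hPQ : (P - Q).IsSymm)
    {c : ℝ} (h : c * frobNorm (P - Q) ^ 2 ≤ trace (A * (P - Q)))
    (ht : 0 ≤ trace (At * (Q - P))) :
    c * frobNorm (P - Q) ≤ frobNorm (A - At) := by
  have hcs : c * frobNorm (P - Q) ^ 2 ≤ frobNorm (A - At) * frobNorm (P - Q) :=
    calc c * frobNorm (P - Q) ^ 2 ≤ trace (A * (P - Q)) + trace (At * (Q - P)) := by linarith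
      _ = trace ((A - At) * (P - Q)ᵀ) := by
        rw [hPQ.eq, ← neg_sub P Q, Matrix.mul_neg, trace_neg, Matrix.sub_mul, trace_sub]
        ring
      _ ≤ frobNorm (A - At) * frobNorm (P - Q) := trace_mul_transpose_le_frobNorm_mul _ _
  rcases (frobNorm_nonneg (P - Q)).eq_or_lt with h0 | hpos
  · rw [← h0, mul_zero]
    exact frobNorm_nonneg _
  · exact le_of_mul_le_mul_right (by linarith) hpos

lemma submatrix_id_mul_transpose_submatrix_id [DecidableEq n] {l : Type*} (U : Matrix l n ℝ)
    [Fintype k] {e : k → n} (he : Function.Injective e) :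
    U.submatrix id e * (U.submatrix id e)ᵀ =
      U * (diagonal ((Set.range e).indicator 1) : Matrix n n ℝ) * Uᵀ := by
  ext i j
  set t := Finset.univ.map ⟨e, he⟩
  have hrange : Set.range e = ↑t := by simp [t]
  rw [mul_apply, mul_apply]
  simp only [mul_diagonal, submatrix_apply, transpose_apply, id, hrange]
  symm
  calc _ = ∑ y, (t : Set n).indicator (fun y ↦ U i y * U j y) y := by
        simp only [Set.indicator_apply, Pi.one_apply, mul_ite, ite_mul, mul_one, mul_zero,
          zero_mul]
    _ = ∑ x, U i (e x) * U j (e x) := by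
        rw [Finset.sum_indicator_subset _ (Finset.subset_univ _), Finset.sum_map]
        rfl

lemma Antitone.bounds_range_castLE {L K : ℕ} {lam : Fin L → ℝ} (hlam : Antitone lam)
    (hKL : K < L) :
    (∀ i ∈ Set.range (Fin.castLE hKL.le),
        lam ⟨K - 1, (K.sub_le 1).trans_lt hKL⟩ ≤ lam i) ∧
      ∀ i ∉ Set.range (Fin.castLE hKL.le), lam i ≤ lam ⟨K, hKL⟩ := by
  simp only [Fin.range_castLE, Set.mem_ofPred_eq, not_lt]
  exact ⟨fun i hi ↦ hlam (Fin.le_def.2 (by simp; omega)), fun i hi ↦ hlam (Fin.le_def.2 hi)⟩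

/-- Davis–Kahan-type bound. If `G` (resp. `G̃`) consists of
orthonormal eigenvectors of `XXᵀ` (resp. `X̃X̃ᵀ`) for the `K` largest
eigenvalues, and the eigenvalues `λ` of `XXᵀ` (in decreasing order) satisfy
`λ_K > λ_{K+1}`, then
`‖GGᵀ − G̃G̃ᵀ‖_F ≤ (2/(λ_K − λ_{K+1})) ‖XXᵀ − X̃X̃ᵀ‖_F`. -/
theorem stmt_5 (L n K : ℕ) (hKL : K < L)
    (X Xt : Matrix (Fin L) (Fin n) ℝ)
    (lam : Fin L → ℝ) (hlam : Antitone lam)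
    (U : Matrix (Fin L) (Fin L) ℝ) (hU : Uᵀ * U = 1)
    (hX : X * Xᵀ = U * Matrix.diagonal lam * Uᵀ)
    (lamt : Fin L → ℝ) (hlamt : Antitone lamt)
    (Ut : Matrix (Fin L) (Fin L) ℝ) (hUt : Utᵀ * Ut = 1)
    (hXt : Xt * Xtᵀ = Ut * Matrix.diagonal lamt * Utᵀ)
    (G : Matrix (Fin L) (Fin K) ℝ)
    (hG : ∀ i k, G i k = U i (Fin.castLE hKL.le k))
    (Gt : Matrix (Fin L) (Fin K) ℝ)
    (hGt : ∀ i k, Gt i k = Ut i (Fin.castLE hKL.le k))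
    (hgap : lam ⟨K, hKL⟩ < lam ⟨K - 1, by omega⟩) :
    frobNorm (G * Gᵀ - Gt * Gtᵀ) ≤
      (2 / (lam ⟨K - 1, by omega⟩ - lam ⟨K, hKL⟩)) *
        frobNorm (X * Xᵀ - Xt * Xtᵀ) := by
  set D : Matrix (Fin L) (Fin L) ℝ := diagonal ((Set.range (Fin.castLE hKL.le)).indicator 1)
  have hP : G * Gᵀ = U * D * Uᵀ := by
    rw [show G = U.submatrix id (Fin.castLE hKL.le) from Matrix.ext hG]
    exact submatrix_id_mul_transpose_submatrix_id U (Fin.castLE_injective _)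
  have hQ : Gt * Gtᵀ = Ut * D * Utᵀ := by
    rw [show Gt = Ut.submatrix id (Fin.castLE hKL.le) from Matrix.ext hGt]
    exact submatrix_id_mul_transpose_submatrix_id Ut (Fin.castLE_injective _)
  have hD := isStarProjection_diagonal_indicator (n := Fin L) (Set.range (Fin.castLE hKL.le))
  obtain ⟨ha, hb⟩ := hlam.bounds_range_castLE hKL
  obtain ⟨hat, hbt⟩ := hlamt.bounds_range_castLE hKL
  have hkey := gap_mul_frobNorm_sq_le_trace hU ha hb (hD.mul_mul_transpose hUt)
    (trace_mul_mul_transpose hUt _)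
  have hkeyt := gap_mul_frobNorm_sq_le_trace hUt hat hbt (hD.mul_mul_transpose hU)
    (trace_mul_mul_transpose hU _)
  have hgapt : 0 ≤ (lamt ⟨K - 1, by omega⟩ - lamt ⟨K, hKL⟩) / 2 :=
    div_nonneg (sub_nonneg.2 (hlamt (Nat.sub_le K 1))) zero_le_two
  have hbound := mul_frobNorm_sub_le_of_trace_bounds
    ((hD.mul_mul_transpose hU).isSymm.sub (hD.mul_mul_transpose hUt).isSymm) hkey
    ((mul_nonneg hgapt (sq_nonneg _)).trans hkeyt)
  rw [hX, hXt, hP, hQ, div_mul_eq_mul_div, le_div_iff₀ (sub_pos.2 hgap)]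
  linarith
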